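/- Let A ∈ ℝ^{m×n}, b ∈ ℝ^m, let f(v) = (1/2)‖v − b‖₂², and let g(x) = ∑_{i=1}^n g_i(x_i) be an additively separable regularizer with g_i : ℝ → ℝ. Let P₁, …, P_K be a partition of the index set {1, …, n}, and for Δx ∈ ℝ^n let Δx_[k] ∈ ℝ^n denote the vector agreeing with Δx on P_k and zero elsewhere, so that Δx = ∑_{k=1}^K Δx_[k]. Set v = A x. Then the sum of the local subproblem values bounds the global objective at the updated point: f(A(x + Δx)) + g(x + Δx) ≤ ∑_{k=1}^K Γ_k(Δx_[k]; v, x), where Γ_k(Δx_[k]; v, x) = (1/K) f(v) + ⟨v − b, A Δx_[k]⟩ + (K/2)‖A Δx_[k]‖₂² + ∑_{i ∈ P_k} g_i(x_i + Δx_i). -/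

import Mathlib

/-!
With `v = A x`, the new residual is `(v - b) + ∑ₖ A Δx_[k]`, so the loss expands exactly into
`f v + ⟪v - b, ∑ₖ A Δx_[k]⟫ + ½‖∑ₖ A Δx_[k]‖²`. The triangle inequality and Cauchy–Schwarz bound
the last term by `(K/2) ∑ₖ ‖A Δx_[k]‖²`, and the separable regularizer splits exactly over the
partition.
-/

open scoped RealInnerProductSpace
open Finset

section Partition

variable {ι κ : Type*} [DecidableEq ι] [Fintype κ] {P : κ → Finset ι}

theorem sum_ite_mem_of_partition {M : Type*} [AddCommMonoid M]
    (hdisj : ∀ k l, k ≠ l → Disjoint (P k) (P l)) (hcover : ∀ i, ∃ k, i ∈ P k)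
    (i : ι) (c : M) : ∑ k, (if i ∈ P k then c else 0) = c := by
  obtain ⟨k₀, hk₀⟩ := hcover i
  rw [sum_eq_single k₀ (fun k _ hk => if_neg fun hik => disjoint_left.mp (hdisj k k₀ hk) hik hk₀)
    fun h => (h (mem_univ k₀)).elim, if_pos hk₀]

theorem sum_eq_sum_sum_of_partition [Fintype ι] {M : Type*} [AddCommMonoid M]
    (hdisj : ∀ k l, k ≠ l → Disjoint (P k) (P l)) (hcover : ∀ i, ∃ k, i ∈ P k) (h : ι → M) :
    ∑ i, h i = ∑ k, ∑ i ∈ P k, h i := by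
  calc ∑ i, h i = ∑ i, ∑ k, (if i ∈ P k then h i else 0) := by
        simp only [sum_ite_mem_of_partition hdisj hcover]
    _ = ∑ k, ∑ i ∈ P k, h i := by
        rw [sum_comm]
        simp only [← sum_filter, filter_mem_eq_inter, univ_inter]

theorem sum_restrict_of_partition [Fintype ι] {𝕜 : Type*} [RCLike 𝕜]
    (hdisj : ∀ k l, k ≠ l → Disjoint (P k) (P l)) (hcover : ∀ i, ∃ k, i ∈ P k)
    (y : EuclideanSpace 𝕜 ι) (ypart : κ → EuclideanSpace 𝕜 ι)
    (hypart : ∀ k i, ypart k i = if i ∈ P k then y i else 0) :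
    ∑ k, ypart k = y := by
  ext i
  simp only [WithLp.ofLp_sum, Finset.sum_apply, hypart]
  exact sum_ite_mem_of_partition hdisj hcover i (y i)

end Partition

theorem norm_sum_sq_le_card_mul_sum_norm_sq {κ E : Type*} [SeminormedAddCommGroup E]
    (s : Finset κ) (w : κ → E) : ‖∑ k ∈ s, w k‖ ^ 2 ≤ #s * ∑ k ∈ s, ‖w k‖ ^ 2 :=
  (pow_le_pow_left₀ (norm_nonneg _) (norm_sum_le _ _) 2).trans sq_sum_le_card_mul_sum_sq

theorem half_norm_add_sum_sq_le {κ F : Type*} [Fintype κ] [Nonempty κ]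
    [NormedAddCommGroup F] [InnerProductSpace ℝ F] (u : F) (w : κ → F) :
    1 / 2 * ‖u + ∑ k, w k‖ ^ 2 ≤
      ∑ k, (1 / (Fintype.card κ : ℝ) * (1 / 2 * ‖u‖ ^ 2) + ⟪u, w k⟫
        + (Fintype.card κ : ℝ) / 2 * ‖w k‖ ^ 2) := by
  have hcard : (0 : ℝ) < Fintype.card κ := by exact_mod_cast Fintype.card_pos
  have hquad := norm_sum_sq_le_card_mul_sum_norm_sq univ w
  rw [card_univ] at hquad
  rw [sum_add_distrib, sum_add_distrib, sum_const, card_univ, nsmul_eq_mul, ← inner_sum,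
    ← mul_sum, norm_add_sq_real, ← mul_assoc, mul_one_div_cancel hcard.ne', one_mul]
  linarith

/-- Let `A ∈ ℝ^{m×n}`, `b ∈ ℝ^m`, `f(v) = (1/2)‖v − b‖₂²`, and `g(x) = ∑ g_i(x_i)` an
additively separable regularizer. Let `P₁, …, P_K` partition `{1,…,n}`, and for
`Δx ∈ ℝ^n` let `Δx_[k]` agree with `Δx` on `P_k` and be zero elsewhere. Set `v = A x`.
Then `f(A(x + Δx)) + g(x + Δx) ≤ ∑_k Γ_k(Δx_[k]; v, x)`, where
`Γ_k(Δx_[k]; v, x) = (1/K) f(v) + ⟨v − b, A Δx_[k]⟩ + (K/2)‖A Δx_[k]‖₂²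
 + ∑_{i ∈ P_k} g_i(x_i + Δx_i)`. -/
theorem stmt_10 (m n K : ℕ) (hK : 1 ≤ K)
    (A : Matrix (Fin m) (Fin n) ℝ) (b : EuclideanSpace ℝ (Fin m))
    (gi : Fin n → ℝ → ℝ)
    (P : Fin K → Finset (Fin n))
    (hPdisj : ∀ k l, k ≠ l → Disjoint (P k) (P l))
    (hPcover : ∀ i : Fin n, ∃ k, i ∈ P k)
    (x Δx : EuclideanSpace ℝ (Fin n))
    (Δxpart : Fin K → EuclideanSpace ℝ (Fin n))
    (hΔxpart : ∀ k i, Δxpart k i = if i ∈ P k then Δx i else 0)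
    (f : EuclideanSpace ℝ (Fin m) → ℝ)
    (hf : f = fun v => (1 / 2 : ℝ) * ‖v - b‖ ^ 2)
    (v : EuclideanSpace ℝ (Fin m)) (hv : v = Matrix.toEuclideanLin A x) :
    f (Matrix.toEuclideanLin A (x + Δx)) + ∑ i, gi i (x i + Δx i) ≤
      ∑ k, ((1 / (K : ℝ)) * f v + ⟪v - b, Matrix.toEuclideanLin A (Δxpart k)⟫
        + ((K : ℝ) / 2) * ‖Matrix.toEuclideanLin A (Δxpart k)‖ ^ 2
        + ∑ i ∈ P k, gi i (x i + Δx i)) := by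
  subst hf hv
  beta_reduce
  set T := Matrix.toEuclideanLin A
  have : Nonempty (Fin K) := ⟨⟨0, hK⟩⟩
  have hresidual : T (x + Δx) - b = (T x - b) + ∑ k, T (Δxpart k) := by
    rw [← map_sum, sum_restrict_of_partition hPdisj hPcover Δx Δxpart hΔxpart, map_add]
    abel
  have hloss := half_norm_add_sum_sq_le (T x - b) (fun k => T (Δxpart k))
  rw [Fintype.card_fin] at hloss
  rw [sum_eq_sum_sum_of_partition hPdisj hPcover, sum_add_distrib (g := fun k => ∑ i ∈ P k, _),
    hresidual]
  exact add_le_add_left hloss _
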